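/- arXiv:2204.11492 — 2 statements merged into one kernel-verified Lean document; each statement's English description precedes it below -/
import Mathlib

section
/- Let G be a group, N a finite-index normal subgroup, R a right transversal with 1 ∈ R, and y : G → R defined by y(nr) = r. If g ∈ G satisfies σ^g(y) = y, then g ∈ N. -/
/-- The shift action: `σ^g(x)(h) = x(g⁻¹h)`. -/
def shiftAct {G A : Type*} [Group G] (g : G) (x : G → A) : G → A :=
  fun h => x (g⁻¹ * h)

/-! A configuration fixed by `σ^g` takes the same value at `g` and at `1`; for the locked
configuration these values are the transversal representative of `g` and `1`, so `g ∈ N`. -/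

theorem shiftAct_apply_self {G A : Type*} [Group G] (g : G) (x : G → A) :
    shiftAct g x g = x 1 := by
  simp only [shiftAct, inv_mul_cancel]

theorem apply_self_eq_apply_one_of_shiftAct_eq {G A : Type*} [Group G] {g : G} {x : G → A}
    (hx : shiftAct g x = x) : x g = x 1 := by
  rw [← shiftAct_apply_self g x, hx]

theorem apply_eq_of_mul_inv_mem {G : Type*} [Group G] {N : Subgroup G} {R : Set G} {y : G → G}
    (hy : ∀ n r : G, n ∈ N → r ∈ R → y (n * r) = r) {g r : G} (hr : r ∈ R) (hgr : g * r⁻¹ ∈ N) :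
    y g = r := by
  simpa using hy (g * r⁻¹) r hgr hr

theorem locked_config_stabilizer_in_N_general {G : Type*} [Group G]
    (N : Subgroup G)
    (R : Set G) (h1R : (1 : G) ∈ R)
    -- every `g ∈ G` decomposes uniquely as `g = n * r` with `n ∈ N`, `r ∈ R`
    (hdec : ∀ g : G, ∃! r : G, r ∈ R ∧ g * r⁻¹ ∈ N)
    (y : G → G)
    (hy : ∀ n r : G, n ∈ N → r ∈ R → y (n * r) = r)
    (g : G) (hg : shiftAct g y = y) :
    g ∈ N := by
  obtain ⟨r, ⟨hrR, hgr⟩, -⟩ := hdec g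
  have hr_one : r = 1 := by
    rw [← apply_eq_of_mul_inv_mem hy hrR hgr, apply_self_eq_apply_one_of_shiftAct_eq hg,
      apply_eq_of_mul_inv_mem hy h1R (by simp)]
  simpa [hr_one] using hgr

theorem locked_config_stabilizer_in_N {G : Type*} [Group G]
    (N : Subgroup G) [N.Normal] [N.FiniteIndex]
    (R : Set G) (h1R : (1 : G) ∈ R)
    -- every `g ∈ G` decomposes uniquely as `g = n * r` with `n ∈ N`, `r ∈ R`
    (hdec : ∀ g : G, ∃! r : G, r ∈ R ∧ g * r⁻¹ ∈ N)
    (y : G → G)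
    (hy : ∀ n r : G, n ∈ N → r ∈ R → y (n * r) = r)
    (g : G) (hg : shiftAct g y = y) :
    g ∈ N :=
  locked_config_stabilizer_in_N_general N R h1R hdec y hy g hg
end

section
/- For n, m ≥ 2, the subgroup of the torus knot group Λ(n,m) = ⟨a, b | aⁿ = bᵐ⟩ generated by aⁿ and ba is isomorphic to ℤ², i.e. these two elements commute and generate a free abelian group of rank 2. -/
/-- Relators of the torus knot group `Λ(n,m) = ⟨a, b | aⁿ = bᵐ⟩`. -/
def torusRels (n m : ℕ) : Set (FreeGroup (Fin 2)) :=
  {FreeGroup.of 0 ^ n * (FreeGroup.of 1 ^ m)⁻¹}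

/-- The torus knot group `Λ(n,m)`. -/
def TorusKnotGroup (n m : ℕ) := PresentedGroup (torusRels n m)

instance (n m : ℕ) : Group (TorusKnotGroup n m) := by
  unfold TorusKnotGroup; infer_instance

/-- The generator `a` of `Λ(n,m)`. -/
def tkA (n m : ℕ) : TorusKnotGroup n m := PresentedGroup.of 0

/-- The generator `b` of `Λ(n,m)`. -/
def tkB (n m : ℕ) : TorusKnotGroup n m := PresentedGroup.of 1


/-!
The element `aⁿ = bᵐ` commutes with both generators, hence is central. Sending `a, b` to the
generators of `ℤ/n ∗ ℤ/m` kills `aⁿ` and maps `ba` to a product of two nontrivial letters from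
different factors, which has infinite order by the normal form for free products; so in a relation
`(aⁿ)ᵏ (ba)ˡ = 1` we get `l = 0`. The homomorphism `a ↦ m, b ↦ n` to `ℤ` then sends `aⁿ` to
`nm ≠ 0`, forcing `k = 0`.
-/

namespace Monoid.CoprodI.NeWord

variable {ι : Type*} {M : ι → Type*} [∀ i, Monoid (M i)]

theorem prod_ne_one {i j : ι} (w : NeWord M i j) : w.prod ≠ 1 := by
  classical
  intro h
  have hw : w.toWord = Word.empty := Word.equiv.symm.injective (h.trans Word.prod_empty.symm)
  exact w.toList_ne_nil (congrArg Word.toList hw)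

/-- The reduced word `u v u v ⋯ u v` with `k + 1` copies of `u v`. -/
def alternating {i j : ι} (hij : i ≠ j) {u : M i} {v : M j} (hu : u ≠ 1) (hv : v ≠ 1) :
    ℕ → NeWord M i j
  | 0 => (singleton u hu).append hij (singleton v hv)
  | k + 1 => (alternating hij hu hv 0).append hij.symm (alternating hij hu hv k)

theorem prod_alternating {i j : ι} (hij : i ≠ j) {u : M i} {v : M j} (hu : u ≠ 1) (hv : v ≠ 1) :
    ∀ k : ℕ, (alternating hij hu hv k).prod = (of u * of v) ^ (k + 1)
  | 0 => by simp [alternating]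
  | k + 1 => by
    rw [alternating, append_prod, prod_alternating hij hu hv k, prod_alternating hij hu hv 0,
      pow_one, pow_succ' _ (k + 1)]

end Monoid.CoprodI.NeWord

namespace Monoid.CoprodI

theorem not_isOfFinOrder_of_mul_of {ι : Type*} {M : ι → Type*} [∀ i, Monoid (M i)] {i j : ι}
    (hij : i ≠ j) {u : M i} {v : M j} (hu : u ≠ 1) (hv : v ≠ 1) :
    ¬IsOfFinOrder (of u * of v) := by
  rw [isOfFinOrder_iff_pow_eq_one]
  rintro ⟨_ | k, hpos, hk⟩
  · exact hpos.false
  exact (NeWord.alternating hij hu hv k).prod_ne_one (by rw [NeWord.prod_alternating, hk])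

end Monoid.CoprodI

open Subgroup in
theorem Commute.nonempty_closure_pair_mulEquiv {G : Type*} [Group G] {x y : G}
    (hxy : Commute x y) (hindep : ∀ k l : ℤ, x ^ k * y ^ l = 1 → k = 0 ∧ l = 0) :
    Nonempty (closure {x, y} ≃* Multiplicative (ℤ × ℤ)) := by
  let χ : Multiplicative ℤ × Multiplicative ℤ →* G :=
    (zpowersHom G x).noncommCoprod (zpowersHom G y) fun k l => hxy.zpow_zpow _ _
  have hinj : Function.Injective χ := by
    rw [injective_iff_map_eq_one]
    rintro ⟨k, l⟩ h
    obtain ⟨hk, hl⟩ := hindep k.toAdd l.toAdd h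
    exact Prod.ext (toAdd_eq_zero.mp hk) (toAdd_eq_zero.mp hl)
  have hrange : χ.range = closure {x, y} := by
    refine (MonoidHom.noncommCoprod_range _ _ _).trans ?_
    rw [range_zpowersHom, range_zpowersHom, zpowers_eq_closure,
      zpowers_eq_closure, ← Subgroup.closure_union, Set.singleton_union]
  exact ⟨(MulEquiv.subgroupCongr hrange.symm).trans
    ((MonoidHom.ofInjective hinj).symm.trans (MulEquiv.prodMultiplicative ℤ ℤ).symm)⟩

namespace TorusKnotGroup

variable {n m : ℕ}

theorem tkA_pow_eq_tkB_pow : tkA n m ^ n = tkB n m ^ m :=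
  PresentedGroup.mk_eq_mk_of_mul_inv_mem (by simp [torusRels])

theorem commute_tkA_pow (g : TorusKnotGroup n m) : Commute (tkA n m ^ n) g := by
  have hg : g ∈ Subgroup.closure (Set.range PresentedGroup.of) := by
    rw [PresentedGroup.closure_range_of]
    exact Subgroup.mem_top g
  induction hg using Subgroup.closure_induction with
  | mem _ hgen =>
    obtain ⟨i, rfl⟩ := hgen
    fin_cases i
    · exact (Commute.refl (tkA n m)).pow_left n
    · exact tkA_pow_eq_tkB_pow (n := n) (m := m) ▸ (Commute.refl (tkB n m)).pow_left m
  | one => exact Commute.one_right _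
  | mul _ _ _ _ h₁ h₂ => exact h₁.mul_right h₂
  | inv _ _ h => exact h.inv_right

def lift {G : Type*} [Group G] (u v : G) (h : u ^ n = v ^ m) : TorusKnotGroup n m →* G :=
  PresentedGroup.toGroup (f := ![u, v]) (by simp [torusRels, h])

@[simp]
theorem lift_tkA {G : Type*} [Group G] {u v : G} (h : u ^ n = v ^ m) : lift u v h (tkA n m) = u :=
  PresentedGroup.toGroup.of _

@[simp]
theorem lift_tkB {G : Type*} [Group G] {u v : G} (h : u ^ n = v ^ m) : lift u v h (tkB n m) = v :=
  PresentedGroup.toGroup.of _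

def degree : TorusKnotGroup n m →* Multiplicative ℤ :=
  lift (.ofAdd (m : ℤ)) (.ofAdd (n : ℤ)) (by simp only [← ofAdd_nsmul, nsmul_eq_mul, mul_comm])

abbrev ZModFreeProd (n m : ℕ) : Type :=
  Monoid.CoprodI fun i : Fin 2 => Multiplicative (ZMod (![n, m] i))

def ZModFreeProd.gen (i : Fin 2) : ZModFreeProd n m :=
  Monoid.CoprodI.of (i := i) (Multiplicative.ofAdd 1)

theorem ZModFreeProd.gen_pow (i : Fin 2) : gen (n := n) (m := m) i ^ (![n, m] i) = 1 := by
  rw [gen, ← map_pow, ← ofAdd_nsmul, nsmul_one, ZMod.natCast_self, ofAdd_zero, map_one]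

theorem ZModFreeProd.not_isOfFinOrder_gen_one_mul_gen_zero (hn : n ≠ 1) (hm : m ≠ 1) :
    ¬IsOfFinOrder (gen 1 * gen 0 : ZModFreeProd n m) := by
  have : Nontrivial (ZMod n) := ZMod.nontrivial_iff.mpr hn
  have : Nontrivial (ZMod m) := ZMod.nontrivial_iff.mpr hm
  exact Monoid.CoprodI.not_isOfFinOrder_of_mul_of (by decide)
    (ofAdd_eq_one.not.mpr (one_ne_zero (α := ZMod m)))
    (ofAdd_eq_one.not.mpr (one_ne_zero (α := ZMod n)))

def toZModFreeProd : TorusKnotGroup n m →* ZModFreeProd n m :=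
  -- `![n, m] 0` is `n` only up to unfolding, so `gen_pow` has to be simplified before use
  lift (ZModFreeProd.gen 0) (ZModFreeProd.gen 1)
    (by simpa using (ZModFreeProd.gen_pow 0).trans (ZModFreeProd.gen_pow 1).symm)

theorem eq_zero_of_tkA_pow_zpow_mul_zpow_eq_one (hn : 2 ≤ n) (hm : 2 ≤ m) {k l : ℤ}
    (h : (tkA n m ^ n) ^ k * (tkB n m * tkA n m) ^ l = 1) : k = 0 ∧ l = 0 := by
  have hl : l = 0 := by
    have h' := congrArg toZModFreeProd h
    simp only [toZModFreeProd, map_mul, map_zpow, map_pow, map_one, lift_tkA, lift_tkB] at h'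
    rw [show ZModFreeProd.gen 0 ^ n = 1 from ZModFreeProd.gen_pow 0, one_zpow, one_mul] at h'
    exact injective_zpow_iff_not_isOfFinOrder.mpr
      (ZModFreeProd.not_isOfFinOrder_gen_one_mul_gen_zero (by omega) (by omega))
      (h'.trans (zpow_zero _).symm)
  subst hl
  have hdeg := congrArg (Multiplicative.toAdd ∘ degree) h
  simp only [degree, Function.comp_apply, zpow_zero, mul_one, map_zpow, map_pow, map_one, lift_tkA,
    toAdd_zpow, toAdd_pow, toAdd_ofAdd, toAdd_one, Int.nsmul_eq_mul, Int.zsmul_eq_mul, mul_eq_zero,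
    Int.natCast_eq_zero] at hdeg
  exact ⟨by omega, rfl⟩

end TorusKnotGroup

theorem torusKnotGroup_contains_Z2 (n m : ℕ) (hn : 2 ≤ n) (hm : 2 ≤ m) :
    Commute (tkA n m ^ n) (tkB n m * tkA n m) ∧
    Nonempty ((Subgroup.closure {tkA n m ^ n, tkB n m * tkA n m} : Subgroup (TorusKnotGroup n m))
      ≃* Multiplicative (ℤ × ℤ)) :=
  ⟨TorusKnotGroup.commute_tkA_pow _,
    (TorusKnotGroup.commute_tkA_pow _).nonempty_closure_pair_mulEquiv fun _ _ h =>
      TorusKnotGroup.eq_zero_of_tkA_pow_zpow_mul_zpow_eq_one hn hm h⟩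
end
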